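/- Soundness of s-FT recovery: let T be a finite transducer over witness characters of a minterm partition, and let T' be the symbolic transducer obtained by the recovery algorithm (each transition q →c/y_0⋯y_n q' becomes q →μ(c)/f_0⋯f_n q' where f_i is the identity if c = y_i, an offset function x + offset(I_1, I_2) if μ(c) and μ(y_i) are single intervals I_1, I_2 of equal size, and the constant y_i otherwise). Then finitizing T' using the same witness characters yields T back: finite(T') = T. -/

import Mathlib

/-- Cost structure for Levenshtein edit distance (as in the former Mathlib
`Mathlib/Data/List/EditDistance/Defs.lean`, since removed). -/
structure Levenshtein.Cost (α β δ : Type*) where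
  delete : α → δ
  insert : β → δ
  substitute : α → β → δ

/-- The default cost structure: unit cost for insertion, deletion and substitution. -/
def Levenshtein.defaultCost {α : Type*} [DecidableEq α] : Levenshtein.Cost α α ℕ where
  delete _ := 1
  insert _ := 1
  substitute a b := if a = b then 0 else 1

/-- Helper for `suffixLevenshtein` (former Mathlib definition). -/
def Levenshtein.impl {α β δ : Type*} [AddZeroClass δ] [Min δ] (C : Levenshtein.Cost α β δ)
    (xs : List α) (y : β) (d : {r : List δ // 0 < r.length}) : {r : List δ // 0 < r.length} :=
  let ⟨ds, w⟩ := d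
  xs.zip (ds.zip ds.tail) |>.foldr
    (init := ⟨[ds.getLast (List.length_pos_iff.mp w) + C.insert y], by simp⟩)
    (fun ⟨x, d₀, d₁⟩ ⟨r, w⟩ =>
      ⟨min (C.delete x + r[0]'w) (min (C.insert y + d₀) (C.substitute x y + d₁)) :: r, by simp⟩)

/-- Levenshtein distances from all suffixes of `xs` to `ys` (former Mathlib definition). -/
def suffixLevenshtein {α β δ : Type*} [AddZeroClass δ] [Min δ] (C : Levenshtein.Cost α β δ)
    (xs : List α) (ys : List β) : {r : List δ // 0 < r.length} :=
  ys.foldr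
    (Levenshtein.impl C xs)
    (xs.foldr (init := ⟨[0], by simp⟩) (fun a ⟨ds, w⟩ => ⟨(C.delete a + ds[0]'w) :: ds, by simp⟩))

/-- Levenshtein edit distance (former Mathlib definition). -/
def levenshtein {α β δ : Type*} [AddZeroClass δ] [Min δ] (C : Levenshtein.Cost α β δ)
    (xs : List α) (ys : List β) : δ :=
  let ⟨r, w⟩ := suffixLevenshtein C xs ys
  r[0]'w

/-- Edit distance between two strings (lists), with unit insertion/deletion/substitution cost. -/
def ed {A : Type*} [DecidableEq A] (s t : List A) : ℕ :=
  levenshtein Levenshtein.defaultCost s t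

/-- A total finite state transducer. -/
structure FT (Q A : Type*) where
  step : Q → A → Q
  out : Q → A → List A
  start : Q

namespace FT

variable {Q A : Type*} (T : FT Q A)

/-- Extended state-transition function. -/
def stepList : Q → List A → Q
  | q, [] => q
  | q, a :: u => stepList (T.step q a) u

/-- Extended output function. -/
def outList : Q → List A → List A
  | _, [] => []
  | q, a :: u => T.out q a ++ outList (T.step q a) u

/-- The output of the transducer on a word. -/
def output (w : List A) : List A := T.outList T.start w

/-- Aggregate cost of `T` on a word, starting from state `q`. -/
def aggCost [DecidableEq A] : Q → List A → ℕ
  | _, [] => 0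
  | q, a :: u => ed [a] (T.out q a) + aggCost (T.step q a) u

end FT

/-- The three shapes of output functions used by the s-FT recovery algorithm. -/
inductive OutFn where
  | id : OutFn
  | offset (k : ℤ) : OutFn
  | const (y : ℤ) : OutFn

def OutFn.apply : OutFn → ℤ → ℤ
  | .id, x => x
  | .offset k, x => x + k
  | .const y, _ => y

/-- The recovery rule: identity if `c = y`; an offset function if the minterms of `c` and
`y` are (single) intervals of equal size; the constant `y` otherwise. Here `μ` maps a
character to (the index of) its minterm interval, `lo` gives the least element of a
minterm interval and `size` its size. -/
def recover {ι : Type*} [DecidableEq ι] [DecidableEq ℤ]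
    (μ : ℤ → ι) (lo : ι → ℤ) (size : ι → ℕ) (c y : ℤ) : OutFn :=
  if c = y then .id
  else if size (μ c) = size (μ y) then .offset (lo (μ y) - lo (μ c))
  else .const y

theorem recover_apply_witness {ι : Type*} [DecidableEq ι] (μ : ℤ → ι) (lo : ι → ℤ)
    (size : ι → ℕ) {c y : ℤ} (hc : c = lo (μ c)) (hy : y = lo (μ y)) :
    (recover μ lo size c y).apply c = y := by
  unfold recover
  split_ifs with hcy
  · exact hcy
  · show c + (lo (μ y) - lo (μ c)) = y
    omega
  · rfl

/-- Soundness of s-FT recovery: if every character appearing in `T` is the witness (least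
element) of its minterm, then finitizing the recovered symbolic transducer with the same
witnesses yields `T` back: on every transition, applying the recovered output functions to
the witness character reproduces the original output string. -/
theorem sft_recovery_sound {ι Q : Type*} [DecidableEq ι]
    (μ : ℤ → ι) (lo : ι → ℤ) (size : ι → ℕ) (T : FT Q ℤ)
    (hchars : ∀ (q : Q) (c : ℤ), c = lo (μ c) → ∀ y ∈ T.out q c, y = lo (μ y)) :
    ∀ (q : Q) (c : ℤ), c = lo (μ c) →
      (T.out q c).map (fun y => (recover μ lo size c y).apply c) = T.out q c := fun q c hc =>
  (List.map_congr_left fun y hy => recover_apply_witness μ lo size hc (hchars q c hc y hy)).trans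
    (List.map_id _)
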